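/- Let c : Fin M → ℝ^d and let D_{ij} ≥ 0 be costs with D_{ii} = 0 for all i and D_{ij} ≤ B for all i,j. Let ω, π be probability vectors and γ a coupling of ω and π with γ_{ii} ≥ min(ω_i, π_i). Suppose further ℓ_i ≤ ω_i ≤ u_i and ℓ_i ≤ π_i ≤ u_i for all i. Then ∑_{i,j} D_{ij} γ_{ij} ≤ B · ∑_i (u_i - ℓ_i). -/

import Mathlib

open Finset

theorem sum_mul_le_mul_sum_sub_of_apply_eq_zero {ι : Type*} [Fintype ι] [DecidableEq ι]
    {f g : ι → ℝ} {B : ℝ} (a : ι) (hfa : f a = 0) (hfB : ∀ j, f j ≤ B) (hg : ∀ j, 0 ≤ g j) :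
    ∑ j, f j * g j ≤ B * (∑ j, g j - g a) := by
  calc ∑ j, f j * g j = ∑ j ∈ univ.erase a, f j * g j := by
        rw [sum_erase _ (by rw [hfa, zero_mul])]
    _ ≤ ∑ j ∈ univ.erase a, B * g j :=
        sum_le_sum fun j _ => mul_le_mul_of_nonneg_right (hfB j) (hg j)
    _ = B * (∑ j, g j - g a) := by
        rw [← mul_sum, ← sum_erase_add univ g (mem_univ a), add_sub_cancel_right]

theorem sub_min_le_sub {a b l u : ℝ} (hla : l ≤ a) (hau : a ≤ u) (hlb : l ≤ b) :
    a - min a b ≤ u - l := by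
  rcases le_total a b with hab | hba
  · rw [min_eq_left hab]; linarith
  · rw [min_eq_right hba]; linarith

theorem stmt_5_general (M : ℕ)
    (D : Fin M → Fin M → ℝ) (B : ℝ)
    (hDdiag : ∀ i, D i i = 0)
    (hDB : ∀ i j, D i j ≤ B)
    (ω π : Fin M → ℝ)
    (γ : Fin M → Fin M → ℝ)
    (hγpos : ∀ i j, 0 ≤ γ i j)
    (hrow : ∀ i, ∑ j, γ i j = ω i)
    (hdiag : ∀ i, γ i i ≥ min (ω i) (π i))
    (ℓ u : Fin M → ℝ)
    (hωbox : ∀ i, ℓ i ≤ ω i ∧ ω i ≤ u i)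
    (hπbox : ∀ i, ℓ i ≤ π i ∧ π i ≤ u i) :
    ∑ i, ∑ j, D i j * γ i j ≤ B * ∑ i, (u i - ℓ i) := by
  rw [mul_sum]
  refine sum_le_sum fun i _ => ?_
  have hB : 0 ≤ B := hDdiag i ▸ hDB i i
  calc ∑ j, D i j * γ i j ≤ B * (ω i - γ i i) := by
        simpa only [hrow i] using
          sum_mul_le_mul_sum_sub_of_apply_eq_zero i (hDdiag i) (hDB i) (hγpos i)
    _ ≤ B * (ω i - min (ω i) (π i)) := by gcongr; exact hdiag i
    _ ≤ B * (u i - ℓ i) :=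
        mul_le_mul_of_nonneg_left (sub_min_le_sub (hωbox i).1 (hωbox i).2 (hπbox i).1) hB

theorem stmt_5 (M d : ℕ) (hM : 0 < M) (hd : 0 < d)
    (c : Fin M → Fin d → ℝ)
    (D : Fin M → Fin M → ℝ) (B : ℝ)
    (hDpos : ∀ i j, 0 ≤ D i j) (hDdiag : ∀ i, D i i = 0)
    (hDB : ∀ i j, D i j ≤ B)
    (ω π : Fin M → ℝ)
    (hω : ∀ i, 0 ≤ ω i) (hπ : ∀ i, 0 ≤ π i)
    (hωsum : ∑ i, ω i = 1) (hπsum : ∑ i, π i = 1)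
    (γ : Fin M → Fin M → ℝ)
    (hγpos : ∀ i j, 0 ≤ γ i j)
    (hrow : ∀ i, ∑ j, γ i j = ω i)
    (hcol : ∀ j, ∑ i, γ i j = π j)
    (hdiag : ∀ i, γ i i ≥ min (ω i) (π i))
    (ℓ u : Fin M → ℝ)
    (hωbox : ∀ i, ℓ i ≤ ω i ∧ ω i ≤ u i)
    (hπbox : ∀ i, ℓ i ≤ π i ∧ π i ≤ u i) :
    ∑ i, ∑ j, D i j * γ i j ≤ B * ∑ i, (u i - ℓ i) :=
  stmt_5_general M D B hDdiag hDB ω π γ hγpos hrow hdiag ℓ u hωbox hπbox
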